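/- arXiv:1107.5638 — 3 statements merged into one kernel-verified Lean document; each statement's English description precedes it below -/
import Mathlib

section
/- Let K be a strong solution to the LTS control problem (S, I, G) with G ⊆ I. Then every infinite run in the closed loop system S^(K) starting from a state in I visits G infinitely often. -/
open scoped Classical


/-- A fullpath of a transition relation `R`: a run that is either infinite
(`len = ⊤`) or ends in a state with no successors. States are indexed `0..len`. -/
structure FullPath {S : Type*} {A : Type*} (R : S → A → S → Prop) where
  len : ℕ∞
  st : ℕ → S
  ac : ℕ → A
  step : ∀ t : ℕ, (t : ℕ∞) < len → R (st t) (ac t) (st (t + 1))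
  maximal : ∀ t : ℕ, (t : ℕ∞) = len → ∀ a s', ¬ R (st t) a s'

/-- `J(S,G,π)`: distance along `π` of its first state to the goal `G`
(`min {n > 0 | π(n) ∈ G}`, `⊤` if no such `n`). -/
noncomputable def pathJ {S A : Type*} {R : S → A → S → Prop} (G : Set S)
    (π : FullPath R) : ℕ∞ :=
  sInf {n : ℕ∞ | ∃ m : ℕ, n = (m : ℕ∞) ∧ 0 < m ∧ (m : ℕ∞) ≤ π.len ∧ π.st m ∈ G}

/-- `π` is a fullpath starting in state `s` with action `a`. -/
def PathStarts {S A : Type*} {R : S → A → S → Prop} (π : FullPath R) (s : S) (a : A) : Prop :=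
  π.st 0 = s ∧ π.ac 0 = a ∧ 0 < π.len

/-- Worst case distance of `s` from the goal region `G` (pessimistic view). -/
noncomputable def Jstrong {S A : Type*} (R : S → A → S → Prop) (G : Set S) (s : S) : ℕ∞ :=
  ⨆ (a : A) (_ : ∃ s', R s a s') (π : FullPath R) (_ : PathStarts π s a), pathJ G π

/-- Best case distance of `s` from the goal region `G` (optimistic view). -/
noncomputable def Jweak {S A : Type*} (R : S → A → S → Prop) (G : Set S) (s : S) : ℕ∞ :=
  ⨆ (a : A) (_ : ∃ s', R s a s'), ⨅ (π : FullPath R) (_ : PathStarts π s a), pathJ G π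

/-- A controller only enables admissible actions. -/
def IsController {S A : Type*} (R : S → A → S → Prop) (K : S → A → Prop) : Prop :=
  ∀ s a, K s a → ∃ s', R s a s'

/-- The set of states on which a controller enables some action. -/
def CtrlDom {S A : Type*} (K : S → A → Prop) : Set S := {s | ∃ a, K s a}

/-- The closed loop transition relation `T⁽ᴷ⁾(s,a,s') = T(s,a,s') ∧ K(s,a)`. -/
def closedLoop {S A : Type*} (R : S → A → S → Prop) (K : S → A → Prop) :
    S → A → S → Prop :=
  fun s a s' => R s a s' ∧ K s a

/-- `K` is a strong solution to the LTS control problem `(R, I, G)`. -/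
def StrongSolution {S A : Type*} (R : S → A → S → Prop) (I G : Set S)
    (K : S → A → Prop) : Prop :=
  IsController R K ∧ I ⊆ CtrlDom K ∧ ∀ s ∈ CtrlDom K, Jstrong (closedLoop R K) G s < ⊤

/-- `K` is a weak solution to the LTS control problem `(R, I, G)`. -/
def WeakSolution {S A : Type*} (R : S → A → S → Prop) (I G : Set S)
    (K : S → A → Prop) : Prop :=
  IsController R K ∧ I ⊆ CtrlDom K ∧ ∀ s ∈ CtrlDom K, Jweak (closedLoop R K) G s < ⊤

def OptimalStrong {S A : Type*} (R : S → A → S → Prop) (I G : Set S)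
    (K : S → A → Prop) : Prop :=
  StrongSolution R I G K ∧
    ∀ K', StrongSolution R I G K' →
      ∀ s, Jstrong (closedLoop R K) G s ≤ Jstrong (closedLoop R K') G s

/-- Most general optimal strong solution. -/
def StrongMgo {S A : Type*} (R : S → A → S → Prop) (I G : Set S)
    (K : S → A → Prop) : Prop :=
  OptimalStrong R I G K ∧ ∀ K', OptimalStrong R I G K' → ∀ s a, K' s a → K s a

def OptimalWeak {S A : Type*} (R : S → A → S → Prop) (I G : Set S)
    (K : S → A → Prop) : Prop :=
  WeakSolution R I G K ∧
    ∀ K', WeakSolution R I G K' →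
      ∀ s, Jweak (closedLoop R K) G s ≤ Jweak (closedLoop R K') G s

/-- Most general optimal weak solution. -/
def WeakMgo {S A : Type*} (R : S → A → S → Prop) (I G : Set S)
    (K : S → A → Prop) : Prop :=
  OptimalWeak R I G K ∧ ∀ K', OptimalWeak R I G K' → ∀ s a, K' s a → K s a

/-!
Each state of a closed-loop run enables the action taken there, so it lies in the domain of `K`.
The suffix of the run from any time `n` is an infinite fullpath of the closed loop from that
state, and finiteness of `Jstrong` there forces it to hit `G` at some later time.
-/

def FullPath.ofRun {S A : Type*} {R : S → A → S → Prop} (st : ℕ → S) (ac : ℕ → A)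
    (h : ∀ t, R (st t) (ac t) (st (t + 1))) : FullPath R where
  len := ⊤
  st := st
  ac := ac
  step t _ := h t
  maximal t ht := absurd ht (ENat.natCast_ne_top t)

section

variable {S A : Type*} {R : S → A → S → Prop} {G : Set S}

theorem pathJ_le_Jstrong {π : FullPath R} (hπ : 0 < π.len) :
    pathJ G π ≤ Jstrong R G (π.st 0) :=
  le_iSup_of_le (π.ac 0) <| le_iSup_of_le ⟨_, π.step 0 hπ⟩ <|
    le_iSup_of_le π <| le_iSup_of_le ⟨rfl, rfl, hπ⟩ le_rfl

theorem exists_pos_mem_of_pathJ_lt_top {π : FullPath R} (h : pathJ G π < ⊤) :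
    ∃ m : ℕ, 0 < m ∧ (m : ℕ∞) ≤ π.len ∧ π.st m ∈ G := by
  obtain ⟨_, ⟨m, rfl, hm⟩, -⟩ := sInf_lt_iff.mp h
  exact ⟨m, hm⟩

theorem StrongSolution.exists_pos_mem_goal {I : Set S} {K : S → A → Prop}
    (hK : StrongSolution R I G K) (π : FullPath (closedLoop R K)) (hπ : 0 < π.len) :
    ∃ m : ℕ, 0 < m ∧ (m : ℕ∞) ≤ π.len ∧ π.st m ∈ G :=
  have hdom : π.st 0 ∈ CtrlDom K := ⟨π.ac 0, (π.step 0 hπ).2⟩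
  exists_pos_mem_of_pathJ_lt_top <| (pathJ_le_Jstrong hπ).trans_lt (hK.2.2 _ hdom)

end

theorem closedLoop_visits_goal_infinitely_often_general {S A : Type*}
    (T : S → A → S → Prop) (I G : Set S) (K : S → A → Prop)
    (hK : StrongSolution T I G K)
    (σ : ℕ → S) (α : ℕ → A)
    (hrun : ∀ t, closedLoop T K (σ t) (α t) (σ (t + 1))) :
    ∀ n, ∃ m, n ≤ m ∧ σ m ∈ G := by
  intro n
  let suffix : FullPath (closedLoop T K) :=
    FullPath.ofRun (fun k => σ (n + k)) (fun k => α (n + k)) fun t => hrun (n + t)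
  obtain ⟨m, -, -, hm⟩ := hK.exists_pos_mem_goal suffix ENat.top_pos
  exact ⟨n + m, Nat.le_add_right n m, hm⟩

/-- If `K` is a strong solution to `(S, I, G)` with `G ⊆ I`, then every
infinite run of the closed loop system starting in `I` visits `G`
infinitely often. -/
theorem closedLoop_visits_goal_infinitely_often {S A : Type*}
    (T : S → A → S → Prop) (I G : Set S) (K : S → A → Prop)
    (hK : StrongSolution T I G K) (hGI : G ⊆ I)
    (σ : ℕ → S) (α : ℕ → A)
    (hrun : ∀ t, closedLoop T K (σ t) (α t) (σ (t + 1)))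
    (h0 : σ 0 ∈ I) :
    ∀ n, ∃ m, n ≤ m ∧ σ m ∈ G :=
  closedLoop_visits_goal_infinitely_often_general T I G K hK σ α hrun
end

section
/- (Correctness of the gradient-based self-loop elimination.) Let H = (X,U,Y,N) be a DTLHS with quantization Q = (A,Γ). Suppose there exists a real state variable x_j and a bound w_j > 0 such that for every concrete transition (x,u,x') with Γ(x) = x̂, Γ(u) = û, Γ(x') = x̂ one has x'_j − x_j ≥ w_j. Then the abstract self loop (x̂, û, x̂) is eliminable: there is no infinite run x_0 u_0 x_1 u_1 … with Γ(x_t) = x̂ and Γ(u_t) = û for all t. The symmetric statement holds when x'_j − x_j ≤ W_j < 0 for all such transitions. -/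
/-!
Along a run that stays in the cell `Γ⁻¹(x̂)` under actions in `Γ⁻¹(û)`, every step raises the
`j`-th coordinate by at least `w`, so after `t` steps it has grown by at least `t * w`. Yet all
states of the run lie in one cell, whose extent in coordinate `j` is at most the quantization
step `M`; for `t > M / w` this is impossible. The decreasing case is the increasing one for
`-x j`.
-/

lemma natCast_mul_le_sub_of_forall_le_succ_sub {f : ℕ → ℝ} {w : ℝ}
    (hgain : ∀ t, w ≤ f (t + 1) - f t) (t : ℕ) : t * w ≤ f t - f 0 := by
  induction t with
  | zero => simp
  | succ k ih =>
    push_cast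
    linarith [hgain k]

lemma exists_lt_sub_of_forall_le_succ_sub {f : ℕ → ℝ} {w : ℝ} (hw : 0 < w)
    (hgain : ∀ t, w ≤ f (t + 1) - f t) (M : ℝ) : ∃ t, M < f t - f 0 := by
  obtain ⟨t, ht⟩ := exists_nat_gt (M / w)
  refine ⟨t, ?_⟩
  calc M < t * w := (div_lt_iff₀ hw).mp ht
    _ ≤ f t - f 0 := natCast_mul_le_sub_of_forall_le_succ_sub hgain t

lemma not_exists_run_of_le_sub {X U : Type*} (N : X → U → X → Prop)
    (S : X → Prop) (A : U → Prop) (φ : X → ℝ) {M w : ℝ} (hw : 0 < w)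
    (hbdd : ∀ x x', S x → S x' → |φ x - φ x'| ≤ M)
    (hgain : ∀ x u x', N x u x' → S x → A u → S x' → w ≤ φ x' - φ x) :
    ¬ ∃ (σ : ℕ → X) (α : ℕ → U),
        (∀ t, N (σ t) (α t) (σ (t + 1))) ∧ ∀ t, S (σ t) ∧ A (α t) := by
  rintro ⟨σ, α, hrun, hin⟩
  obtain ⟨t, ht⟩ := exists_lt_sub_of_forall_le_succ_sub (f := fun t => φ (σ t)) hw
    (fun t => hgain _ _ _ (hrun t) (hin t).1 (hin t).2 (hin (t + 1)).1) M
  exact ht.not_ge ((le_abs_self _).trans (hbdd _ _ (hin t).1 (hin 0).1))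

/-- Correctness of the gradient based self loop elimination: if some real
state coordinate `j` strictly increases by at least `w > 0` (resp. strictly
decreases by at least `|W|`, `W < 0`) along every concrete transition staying
in the abstract state `xh` under the abstract action `uh`, then the abstract
self loop `(xh, uh, xh)` is eliminable: no infinite concrete run stays in
`Γ⁻¹(xh)` with all actions in `Γ⁻¹(uh)`. -/
theorem selfLoop_eliminable {n : ℕ} {U Xh Uh : Type*}
    (N : (Fin n → ℝ) → U → (Fin n → ℝ) → Prop)
    (Gx : (Fin n → ℝ) → Xh) (Gu : U → Uh)
    (xh : Xh) (uh : Uh) (j : Fin n) (M : ℝ)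
    -- the quantization step of the j-th quantization function is finite:
    (hstep : ∀ x x', Gx x = xh → Gx x' = xh → |x j - x' j| ≤ M) :
    ((∃ w : ℝ, 0 < w ∧ ∀ x u x', N x u x' → Gx x = xh → Gu u = uh → Gx x' = xh →
        w ≤ x' j - x j) →
      ¬ ∃ (σ : ℕ → (Fin n → ℝ)) (α : ℕ → U),
          (∀ t, N (σ t) (α t) (σ (t + 1))) ∧
          ∀ t, Gx (σ t) = xh ∧ Gu (α t) = uh) ∧
    ((∃ W : ℝ, W < 0 ∧ ∀ x u x', N x u x' → Gx x = xh → Gu u = uh → Gx x' = xh →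
        x' j - x j ≤ W) →
      ¬ ∃ (σ : ℕ → (Fin n → ℝ)) (α : ℕ → U),
          (∀ t, N (σ t) (α t) (σ (t + 1))) ∧
          ∀ t, Gx (σ t) = xh ∧ Gu (α t) = uh) := by
  constructor
  · rintro ⟨w, hw, hgain⟩
    exact not_exists_run_of_le_sub N (Gx · = xh) (Gu · = uh) (· j) hw hstep hgain
  · rintro ⟨W, hW, hloss⟩
    refine not_exists_run_of_le_sub N (Gx · = xh) (Gu · = uh) (fun x => -x j) (M := M)
      (neg_pos.mpr hW) (fun x x' hx hx' => ?_) (fun x u x' hN hx hu hx' => ?_)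
    · rw [neg_sub_neg, abs_sub_comm]
      exact hstep x x' hx hx'
    · linarith [hloss x u x' hN hx hu hx']
end

section
/- Monotonicity of weak distance under adding self loops: let Ŝ1 = (S, A, T1) and Ŝ2 = (S, A, T2) be LTSs with T2 = T1 ∪ B where B is a set of self loops (s,a,s), and let K be a controller valid for both. Then for every state s ∈ Dom(K), J_weak(Ŝ2^(K), G, s) ≤ max(1, J_weak(Ŝ1^(K), G, s)); in particular if J_weak(Ŝ1^(K), G, s) is finite for all s ∈ Dom(K), so is J_weak(Ŝ2^(K), G, s). -/
open scoped Classical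


/-! Since `K` is a controller for `T1`, every action it enables already has a `T1`-successor, so
`T1^K` and `T2^K` enable the same actions. A fullpath of `T1^K` is therefore also one of `T2^K`
(a run that stops because nothing is enabled stays maximal), and `J_weak` over `T2^K` takes the
same supremum over actions of infima over more paths: `J_weak(T2^K) ≤ J_weak(T1^K)`. -/

namespace FullPath

variable {S A : Type*} {R R' : S → A → S → Prop}

def ofLE (hle : ∀ s a s', R s a s' → R' s a s') (henab : ∀ s a s', R' s a s' → ∃ t, R s a t)
    (π : FullPath R) : FullPath R' where
  len := π.len
  st := π.st
  ac := π.ac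
  step t ht := hle _ _ _ (π.step t ht)
  maximal t ht a s' h := by
    obtain ⟨u, hu⟩ := henab _ _ _ h
    exact π.maximal t ht a u hu

end FullPath

theorem Jweak_le_of_le {S A : Type*} {R R' : S → A → S → Prop}
    (hle : ∀ s a s', R s a s' → R' s a s') (henab : ∀ s a s', R' s a s' → ∃ t, R s a t)
    (G : Set S) (s : S) : Jweak R' G s ≤ Jweak R G s := by
  refine iSup₂_le fun a ⟨s', hs'⟩ => ?_
  refine le_trans ?_ (le_iSup₂_of_le a (henab s a s' hs') le_rfl)
  exact le_iInf₂ fun π hπ => iInf₂_le (π.ofLE hle henab) hπ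

theorem Jweak_closedLoop_le_of_le {S A : Type*} {T T' : S → A → S → Prop} {K : S → A → Prop}
    (hle : ∀ s a s', T s a s' → T' s a s') (hK : IsController T K) (G : Set S) (s : S) :
    Jweak (closedLoop T' K) G s ≤ Jweak (closedLoop T K) G s :=
  Jweak_le_of_le (fun _ _ _ h => ⟨hle _ _ _ h.1, h.2⟩)
    (fun s a _ h => (hK s a h.2).imp fun _ ht => ⟨ht, h.2⟩) G s

theorem Jweak_mono_selfLoops_general {S A : Type*}
    (T1 : S → A → S → Prop) (B : S → A → Prop) (T2 : S → A → S → Prop)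
    (hT2 : ∀ s a s', T2 s a s' ↔ (T1 s a s' ∨ (s' = s ∧ B s a)))
    (K : S → A → Prop)
    (h1 : IsController T1 K)
    (G : Set S) :
    (∀ s ∈ CtrlDom K,
      Jweak (closedLoop T2 K) G s ≤ max 1 (Jweak (closedLoop T1 K) G s)) ∧
    ((∀ s ∈ CtrlDom K, Jweak (closedLoop T1 K) G s < ⊤) →
      ∀ s ∈ CtrlDom K, Jweak (closedLoop T2 K) G s < ⊤) := by
  have hle : ∀ s, Jweak (closedLoop T2 K) G s ≤ Jweak (closedLoop T1 K) G s :=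
    Jweak_closedLoop_le_of_le (fun s a s' h => (hT2 s a s').mpr (Or.inl h)) h1 G
  exact ⟨fun s _ => (hle s).trans (le_max_right _ _),
    fun hfin s hs => (hle s).trans_lt (hfin s hs)⟩

/-- Monotonicity of the weak distance under adding self loops: if `T2` is `T1`
plus a set `B` of self loops, and `K` is a controller for both, then for every
`s ∈ Dom(K)`, `J_weak(T2^K, G, s) ≤ max 1 (J_weak(T1^K, G, s))`; in particular
finiteness of the weak distances is preserved. -/
theorem Jweak_mono_selfLoops {S A : Type*}
    (T1 : S → A → S → Prop) (B : S → A → Prop) (T2 : S → A → S → Prop)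
    (hT2 : ∀ s a s', T2 s a s' ↔ (T1 s a s' ∨ (s' = s ∧ B s a)))
    (K : S → A → Prop)
    (h1 : IsController T1 K) (h2 : IsController T2 K)
    (G : Set S) :
    (∀ s ∈ CtrlDom K,
      Jweak (closedLoop T2 K) G s ≤ max 1 (Jweak (closedLoop T1 K) G s)) ∧
    ((∀ s ∈ CtrlDom K, Jweak (closedLoop T1 K) G s < ⊤) →
      ∀ s ∈ CtrlDom K, Jweak (closedLoop T2 K) G s < ⊤) :=
  Jweak_mono_selfLoops_general T1 B T2 hT2 K h1 G
end
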